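/- arXiv:2003.12936 — 8 statements merged into one kernel-verified Lean document; each statement's English description precedes it below -/
import Mathlib

section
/- Let M be a symmetric positive definite M×M real matrix and let 1 denote the all-ones column vector. Then the maximum of the set of real numbers v such that M - v·11ᵀ is positive semidefinite equals 1/(1ᵀ M⁻¹ 1). -/
/-! The quadratic form of `A - v • w wᵀ` is `xᵀAx - v (w ⬝ x)²`. Cauchy–Schwarz for the inner
product `⟪x, y⟫ = xᵀAy`, applied to `x` and `A⁻¹w`, gives `(w ⬝ x)² ≤ (wᵀA⁻¹w)(xᵀAx)`, so
`v = 1 / (wᵀA⁻¹w)` is admissible; testing at `x = A⁻¹w` shows no larger `v` is. -/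

open Matrix

namespace Matrix

variable {n : Type*} [Fintype n]

theorem PosSemidef.sq_dotProduct_mulVec_le {A : Matrix n n ℝ} (hA : A.PosSemidef) (x y : n → ℝ) :
    (x ⬝ᵥ (A *ᵥ y)) ^ 2 ≤ (x ⬝ᵥ (A *ᵥ x)) * (y ⬝ᵥ (A *ᵥ y)) := by
  let := A.toSeminormedAddCommGroup hA
  let := A.toInnerProductSpace hA
  have h := real_inner_mul_inner_self_le x y
  have hinner : ∀ a b : n → ℝ, (inner ℝ a b : ℝ) = a ⬝ᵥ (A *ᵥ b) := fun a b =>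
    (dotProduct_comm _ _).trans (by rw [star_trivial])
  simpa only [hinner, sq] using h

theorem dotProduct_sub_smul_vecMulVec_mulVec (A : Matrix n n ℝ) (v : ℝ) (w x : n → ℝ) :
    x ⬝ᵥ ((A - v • vecMulVec w w) *ᵥ x) = x ⬝ᵥ (A *ᵥ x) - v * (w ⬝ᵥ x) ^ 2 := by
  rw [sub_mulVec, smul_mulVec, vecMulVec_mulVec, dotProduct_sub, dotProduct_smul, dotProduct_smul]
  simp [dotProduct_comm x w, sq]

theorem IsHermitian.posSemidef_sub_smul_vecMulVec_iff {A : Matrix n n ℝ} (hA : A.IsHermitian)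
    (v : ℝ) (w : n → ℝ) :
    (A - v • vecMulVec w w).PosSemidef ↔ ∀ x, v * (w ⬝ᵥ x) ^ 2 ≤ x ⬝ᵥ (A *ᵥ x) := by
  have hw : (v • vecMulVec w w).IsHermitian :=
    (posSemidef_vecMulVec_self_star w).isHermitian.smul (IsSelfAdjoint.all v)
  simp only [posSemidef_iff_dotProduct_mulVec, star_trivial, dotProduct_sub_smul_vecMulVec_mulVec,
    sub_nonneg, hA.sub hw, true_and]

theorem PosDef.isGreatest_posSemidef_sub_smul_vecMulVec [DecidableEq n] {A : Matrix n n ℝ}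
    (hA : A.PosDef) {w : n → ℝ} (hw : w ≠ 0) :
    IsGreatest {v : ℝ | (A - v • vecMulVec w w).PosSemidef} (1 / (w ⬝ᵥ (A⁻¹ *ᵥ w))) := by
  set u := A⁻¹ *ᵥ w
  have hAu : A *ᵥ u = w := by
    rw [mulVec_mulVec, mul_nonsing_inv _ (isUnit_iff_ne_zero.mpr hA.det_pos.ne'), one_mulVec]
  have hc : 0 < w ⬝ᵥ u := by simpa using hA.inv.dotProduct_mulVec_pos hw
  simp only [IsGreatest, upperBounds, Set.mem_ofPred_eq,
    hA.isHermitian.posSemidef_sub_smul_vecMulVec_iff]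
  refine ⟨fun x => ?_, fun v hv => ?_⟩
  · have hcs := hA.posSemidef.sq_dotProduct_mulVec_le x u
    rw [hAu, dotProduct_comm x w, dotProduct_comm u w] at hcs
    rwa [one_div_mul_eq_div, div_le_iff₀ hc]
  · have hvu := hv u
    rw [hAu, dotProduct_comm u w] at hvu
    rw [le_div_iff₀ hc]
    nlinarith

end Matrix

/-- C-SHIFT Proposition 1: for a symmetric positive definite matrix `A`, the maximum `v`
such that `A - v • 11ᵀ` is positive semidefinite equals `1/(1ᵀ A⁻¹ 1)`. -/
theorem cshift_prop_max_shift {M : ℕ} (hM : 0 < M) (A : Matrix (Fin M) (Fin M) ℝ)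
    (hA : A.PosDef) :
    IsGreatest {v : ℝ | (A - v • vecMulVec (1 : Fin M → ℝ) 1).PosSemidef}
      (1 / ((1 : Fin M → ℝ) ⬝ᵥ (A⁻¹ *ᵥ (1 : Fin M → ℝ)))) :=
  hA.isGreatest_posSemidef_sub_smul_vecMulVec (Function.ne_iff.mpr ⟨⟨0, hM⟩, one_ne_zero⟩)
end

section
/- Let M be a symmetric positive definite matrix and set v* = 1/(1ᵀ M⁻¹ 1). Then the matrix M - v*·11ᵀ is positive semidefinite and singular (its determinant is zero, equivalently the vector M⁻¹1 lies in its kernel). -/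
/-!
Put `u = A⁻¹ 1` and `c = 1 ⬝ᵥ u = u ⬝ᵥ A u`. Cauchy–Schwarz for the semi-inner product
`⟨x, y⟩ = x ⬝ᵥ A y` gives `(1 ⬝ᵥ x)² = ⟨u, x⟩² ≤ c ⟨x, x⟩`, which is the positive
semidefiniteness of `A - c⁻¹ 11ᵀ`; and `(A - c⁻¹ 11ᵀ) u = 1 - c⁻¹ c 1 = 0` with `u ≠ 0`.
-/

open Matrix

namespace Matrix

variable {n : Type*}

theorem PosSemidef.isSymm {A : Matrix n n ℝ} (hA : A.PosSemidef) : A.IsSymm :=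
  hA.isHermitian

variable [Fintype n]

theorem IsSymm.dotProduct_mulVec_comm {R : Type*} [CommSemiring R] {A : Matrix n n R}
    (hA : A.IsSymm) (x y : n → R) : x ⬝ᵥ A *ᵥ y = y ⬝ᵥ A *ᵥ x := by
  rw [dotProduct_mulVec, ← mulVec_transpose, hA.eq, dotProduct_comm]

theorem PosSemidef.dotProduct_mulVec_sq_le {A : Matrix n n ℝ} (hA : A.PosSemidef) (x y : n → ℝ) :
    (x ⬝ᵥ A *ᵥ y) ^ 2 ≤ (x ⬝ᵥ A *ᵥ x) * (y ⬝ᵥ A *ᵥ y) := by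
  have hquad : ∀ t : ℝ, 0 ≤ (x ⬝ᵥ A *ᵥ x) * (t * t) + 2 * (x ⬝ᵥ A *ᵥ y) * t
      + y ⬝ᵥ A *ᵥ y := fun t => by
    have := hA.dotProduct_mulVec_nonneg (t • x + y)
    simp only [star_trivial, mulVec_add, mulVec_smul, add_dotProduct, dotProduct_add,
      smul_dotProduct, dotProduct_smul, smul_eq_mul, hA.isSymm.dotProduct_mulVec_comm y x] at this
    linarith
  have := discrim_le_zero hquad
  rw [discrim] at this
  linarith

variable {A : Matrix n n ℝ} {u b : n → ℝ}

theorem PosSemidef.sub_smul_vecMulVec_of_mulVec_eq (hA : A.PosSemidef) (hu : A *ᵥ u = b) :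
    (A - (1 / (b ⬝ᵥ u)) • vecMulVec b b).PosSemidef := by
  have hb : ∀ x, b ⬝ᵥ x = u ⬝ᵥ A *ᵥ x := fun x => by
    rw [hA.isSymm.dotProduct_mulVec_comm, hu, dotProduct_comm]
  refine posSemidef_iff_dotProduct_mulVec.mpr ⟨?_, fun x => ?_⟩
  · refine hA.isHermitian.sub (IsHermitian.smul ?_ (IsSelfAdjoint.all _))
    simpa using (posSemidef_vecMulVec_self_star b).isHermitian
  · have hcs := hA.dotProduct_mulVec_sq_le u x
    rw [← hb, ← hb] at hcs
    rw [star_trivial, sub_mulVec, smul_mulVec, vecMulVec_mulVec, dotProduct_sub, dotProduct_smul,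
      dotProduct_smul]
    have hc : 0 ≤ b ⬝ᵥ u := by rw [hb]; exact hA.dotProduct_mulVec_nonneg u
    rw [op_smul_eq_mul, dotProduct_comm x b, sub_nonneg, smul_eq_mul, one_div_mul_eq_div,
      ← sq]
    exact div_le_of_le_mul₀ hc (hA.dotProduct_mulVec_nonneg x) (by linarith)

theorem sub_smul_vecMulVec_mulVec_eq_zero (hu : A *ᵥ u = b) (hbu : b ⬝ᵥ u ≠ 0) :
    (A - (1 / (b ⬝ᵥ u)) • vecMulVec b b) *ᵥ u = 0 := by
  rw [sub_mulVec, smul_mulVec, vecMulVec_mulVec, hu]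
  simp [hbu]

end Matrix

/-- For a symmetric positive definite matrix `A` and `v* = 1/(1ᵀ A⁻¹ 1)`, the matrix
`A - v* • 11ᵀ` is positive semidefinite and singular: its determinant is zero, and the
vector `A⁻¹ 1` lies in its kernel. -/
theorem cshift_shifted_matrix_psd_singular {M : ℕ} (hM : 0 < M)
    (A : Matrix (Fin M) (Fin M) ℝ) (hA : A.PosDef) :
    (A - (1 / ((1 : Fin M → ℝ) ⬝ᵥ (A⁻¹ *ᵥ (1 : Fin M → ℝ)))) •
        vecMulVec (1 : Fin M → ℝ) 1).PosSemidef ∧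
    (A - (1 / ((1 : Fin M → ℝ) ⬝ᵥ (A⁻¹ *ᵥ (1 : Fin M → ℝ)))) •
        vecMulVec (1 : Fin M → ℝ) 1).det = 0 ∧
    (A - (1 / ((1 : Fin M → ℝ) ⬝ᵥ (A⁻¹ *ᵥ (1 : Fin M → ℝ)))) •
        vecMulVec (1 : Fin M → ℝ) 1) *ᵥ (A⁻¹ *ᵥ (1 : Fin M → ℝ)) = 0 := by
  have hAu : A *ᵥ (A⁻¹ *ᵥ 1) = 1 := by
    rw [mulVec_mulVec, mul_nonsing_inv A (A.isUnit_iff_isUnit_det.mp hA.isUnit), one_mulVec]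
  have hone : (1 : Fin M → ℝ) ≠ 0 := Function.ne_iff.mpr ⟨⟨0, hM⟩, one_ne_zero⟩
  have hc : 1 ⬝ᵥ (A⁻¹ *ᵥ 1) ≠ 0 := by
    simpa using (hA.inv.dotProduct_mulVec_pos hone).ne'
  have hker := sub_smul_vecMulVec_mulVec_eq_zero hAu hc
  have hu : A⁻¹ *ᵥ (1 : Fin M → ℝ) ≠ 0 := fun h => hc (by rw [h, dotProduct_zero])
  exact ⟨hA.posSemidef.sub_smul_vecMulVec_of_mulVec_eq hAu,
    exists_mulVec_eq_zero_iff.mp ⟨_, hu, hker⟩, hker⟩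
end

section
/- Let X_n, X_m be square-integrable random variables with E[X_n] > 0, E[X_m] > 0, positive variances, and Cov(X_n, X_m) < 0, and let ν > 0. Then (Cov(X_n,X_m) + ν·E[X_n]·E[X_m]) / sqrt((Var(X_n) + ν·E[X_n]²)(Var(X_m) + ν·E[X_m]²)) > Cov(X_n,X_m)/sqrt(Var(X_n)·Var(X_m)); i.e., the correlation of the multiplicatively biased variables strictly exceeds the true correlation whenever the true covariance is negative. -/
open MeasureTheory ProbabilityTheory

/-- Covariance of two real random variables: `Cov(X,Y) = E[XY] - E[X]E[Y]`. -/
noncomputable def cov {Ω : Type*} [MeasurableSpace Ω] (μ : Measure Ω) (X Y : Ω → ℝ) : ℝ :=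
  (∫ ω, X ω * Y ω ∂μ) - (∫ ω, X ω ∂μ) * (∫ ω, Y ω ∂μ)

theorem div_sqrt_mul_lt_add_div_sqrt_add_mul_add {c d v₁ v₂ x y : ℝ} (hc : c ≤ 0)
    (hd : 0 < d) (hv₁ : 0 < v₁) (hv₂ : 0 < v₂) (hx : 0 ≤ x) (hy : 0 ≤ y) :
    c / √(v₁ * v₂) < (c + d) / √((v₁ + x) * (v₂ + y)) := by
  have hs : 0 < √(v₁ * v₂) := Real.sqrt_pos.2 (by positivity)
  have hst : √(v₁ * v₂) ≤ √((v₁ + x) * (v₂ + y)) := by gcongr <;> linarith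
  calc c / √(v₁ * v₂) ≤ c / √((v₁ + x) * (v₂ + y)) := by
        simpa only [neg_div, neg_le_neg_iff] using
          div_le_div_of_nonneg_left (neg_nonneg.2 hc) hs hst
    _ < (c + d) / √((v₁ + x) * (v₂ + y)) :=
      div_lt_div_of_pos_right (lt_add_of_pos_right c hd) (hs.trans_le hst)

theorem biased_corr_gt_of_neg_cov_general {Ω : Type*} [MeasurableSpace Ω] (μ : Measure Ω)
    (Xn Xm : Ω → ℝ)
    (hEn : 0 < ∫ ω, Xn ω ∂μ) (hEm : 0 < ∫ ω, Xm ω ∂μ)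
    (hVn : 0 < cov μ Xn Xn) (hVm : 0 < cov μ Xm Xm)
    (hneg : cov μ Xn Xm < 0) (ν : ℝ) (hν : 0 < ν) :
    cov μ Xn Xm / Real.sqrt (cov μ Xn Xn * cov μ Xm Xm)
      < (cov μ Xn Xm + ν * (∫ ω, Xn ω ∂μ) * (∫ ω, Xm ω ∂μ))
          / Real.sqrt ((cov μ Xn Xn + ν * (∫ ω, Xn ω ∂μ) ^ 2)
              * (cov μ Xm Xm + ν * (∫ ω, Xm ω ∂μ) ^ 2)) :=
  div_sqrt_mul_lt_add_div_sqrt_add_mul_add hneg.le (by positivity) hVn hVm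
    (by positivity) (by positivity)

/-- For square-integrable `Xₙ, Xₘ` with positive means, positive variances and negative
covariance, and any `ν > 0`, the biased correlation
`(Cov + ν EXₙ EXₘ)/√((Var Xₙ + ν EXₙ²)(Var Xₘ + ν EXₘ²))` strictly exceeds the true
correlation `Cov/√(Var Xₙ · Var Xₘ)`. -/
theorem biased_corr_gt_of_neg_cov {Ω : Type*} [MeasurableSpace Ω] (μ : Measure Ω)
    [IsProbabilityMeasure μ] (Xn Xm : Ω → ℝ)
    (hXn : MemLp Xn 2 μ) (hXm : MemLp Xm 2 μ)
    (hEn : 0 < ∫ ω, Xn ω ∂μ) (hEm : 0 < ∫ ω, Xm ω ∂μ)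
    (hVn : 0 < cov μ Xn Xn) (hVm : 0 < cov μ Xm Xm)
    (hneg : cov μ Xn Xm < 0) (ν : ℝ) (hν : 0 < ν) :
    cov μ Xn Xm / Real.sqrt (cov μ Xn Xn * cov μ Xm Xm)
      < (cov μ Xn Xm + ν * (∫ ω, Xn ω ∂μ) * (∫ ω, Xm ω ∂μ))
          / Real.sqrt ((cov μ Xn Xn + ν * (∫ ω, Xn ω ∂μ) ^ 2)
              * (cov μ Xm Xm + ν * (∫ ω, Xm ω ∂μ) ^ 2)) :=
  biased_corr_gt_of_neg_cov_general μ Xn Xm hEn hEm hVn hVm hneg ν hν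
end

section
/- With C̃ symmetric of full rank, A_α = C̃ + α1ᵀ + 1αᵀ invertible, v(α) = 1/(1ᵀA_α⁻¹1), C_α = A_α − v(α)11ᵀ, a = Σᵢαᵢ, and c = 1ᵀC̃1, the squared Frobenius norm satisfies ‖C_α‖_F² = ‖C̃‖_F² + 2M·Σᵢαᵢ² + M²v(α)² + 4·(1ᵀC̃α) + 2a² − 2c·v(α) − 4Ma·v(α). -/
open Matrix BigOperators

/-- `A_α = C̃ + α1ᵀ + 1αᵀ`. -/
noncomputable def Amat {M : ℕ} (Ct : Matrix (Fin M) (Fin M) ℝ) (α : Fin M → ℝ) :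
    Matrix (Fin M) (Fin M) ℝ :=
  Ct + vecMulVec α (1 : Fin M → ℝ) + vecMulVec (1 : Fin M → ℝ) α

/-- `v(α) = 1/(1ᵀ A_α⁻¹ 1)`. -/
noncomputable def vfun {M : ℕ} (Ct : Matrix (Fin M) (Fin M) ℝ) (α : Fin M → ℝ) : ℝ :=
  1 / ((1 : Fin M → ℝ) ⬝ᵥ ((Amat Ct α)⁻¹ *ᵥ (1 : Fin M → ℝ)))

/-- `C_α = A_α − v(α)·11ᵀ`. -/
noncomputable def Cmat {M : ℕ} (Ct : Matrix (Fin M) (Fin M) ℝ) (α : Fin M → ℝ) :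
    Matrix (Fin M) (Fin M) ℝ :=
  Amat Ct α - vfun Ct α • vecMulVec (1 : Fin M → ℝ) (1 : Fin M → ℝ)

/-- Squared Frobenius norm `‖X‖_F² = Σᵢⱼ Xᵢⱼ²`. -/
noncomputable def frobSq {M : ℕ} (X : Matrix (Fin M) (Fin M) ℝ) : ℝ :=
  ∑ i, ∑ j, (X i j) ^ 2

/-!
The identity holds with `v(α)` replaced by any scalar `v`: the entries of `C̃ + α1ᵀ + 1αᵀ − v11ᵀ`
are `C̃ᵢⱼ + Eᵢⱼ` with `Eᵢⱼ = αᵢ + αⱼ − v`, and `‖C̃ + E‖_F² = ‖C̃‖_F² + 2⟨C̃, E⟩ + ‖E‖_F²`.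
By symmetry of `C̃`, `⟨C̃, E⟩ = 2·1ᵀC̃α − v·1ᵀC̃1`, and `‖E‖_F²` is a polynomial in
`M`, `Σαᵢ²`, `Σαᵢ` and `v`.
-/

section

variable {ι : Type*} [Fintype ι]

theorem sum_sum_mul_add_sub_of_isSymm {C : Matrix ι ι ℝ} (hC : C.IsSymm) (α : ι → ℝ) (v : ℝ) :
    ∑ i, ∑ j, C i j * (α i + α j - v)
      = 2 * ((1 : ι → ℝ) ⬝ᵥ (C *ᵥ α)) - v * ((1 : ι → ℝ) ⬝ᵥ (C *ᵥ 1)) := by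
  have hrow : ∑ i, ∑ j, C i j * α i = ∑ i, ∑ j, C i j * α j := by
    rw [Finset.sum_comm]
    simp only [hC.apply]
  simp only [mul_sub, mul_add, Finset.sum_add_distrib, Finset.sum_sub_distrib, hrow]
  simp only [dotProduct, mulVec, Pi.one_apply, one_mul, mul_one, ← Finset.sum_mul]
  ring

theorem sum_sum_add_sub_sq (α : ι → ℝ) (v : ℝ) :
    ∑ i, ∑ j, (α i + α j - v) ^ 2
      = 2 * Fintype.card ι * ∑ i, α i ^ 2 + 2 * (∑ i, α i) ^ 2
        + (Fintype.card ι : ℝ) ^ 2 * v ^ 2 - 4 * Fintype.card ι * (∑ i, α i) * v := by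
  have hexpand : ∀ i j, (α i + α j - v) ^ 2
      = α i ^ 2 + α j ^ 2 + 2 * (α i * α j) + v ^ 2 - 2 * v * α i - 2 * v * α j :=
    fun i j => by ring
  simp only [hexpand, Finset.sum_add_distrib, Finset.sum_sub_distrib, Finset.sum_const,
    Finset.card_univ, nsmul_eq_mul, ← Finset.mul_sum, ← Finset.sum_mul, ← sq]
  ring

end

theorem frobSq_Cmat_expansion_general {M : ℕ} (Ct : Matrix (Fin M) (Fin M) ℝ) (hsym : Ct.IsSymm)
    (α : Fin M → ℝ) :
    frobSq (Cmat Ct α)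
      = frobSq Ct + 2 * (M : ℝ) * (∑ i, (α i) ^ 2) + (M : ℝ) ^ 2 * (vfun Ct α) ^ 2
        + 4 * ((1 : Fin M → ℝ) ⬝ᵥ (Ct *ᵥ α))
        + 2 * (∑ i, α i) ^ 2
        - 2 * ((1 : Fin M → ℝ) ⬝ᵥ (Ct *ᵥ (1 : Fin M → ℝ))) * vfun Ct α
        - 4 * (M : ℝ) * (∑ i, α i) * vfun Ct α := by
  set v := vfun Ct α
  have hentry : ∀ i j, Cmat Ct α i j = Ct i j + (α i + α j - v) := fun i j => by
    simp only [Cmat, Amat, Matrix.sub_apply, Matrix.add_apply, Matrix.smul_apply,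
      vecMulVec_apply, Pi.one_apply, mul_one, one_mul, smul_eq_mul, v]
    ring
  have hsplit : frobSq (Cmat Ct α) = frobSq Ct + 2 * ∑ i, ∑ j, Ct i j * (α i + α j - v)
      + ∑ i, ∑ j, (α i + α j - v) ^ 2 := by
    simp only [frobSq, hentry, add_sq, Finset.sum_add_distrib, Finset.mul_sum, mul_assoc]
  rw [hsplit, sum_sum_mul_add_sub_of_isSymm hsym, sum_sum_add_sub_sq, Fintype.card_fin]
  ring

/-- Expansion of the squared Frobenius norm of `C_α`:
`‖C_α‖_F² = ‖C̃‖_F² + 2M Σαᵢ² + M²v(α)² + 4·1ᵀC̃α + 2a² − 2c·v(α) − 4Ma·v(α)`. -/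
theorem frobSq_Cmat_expansion {M : ℕ} (Ct : Matrix (Fin M) (Fin M) ℝ) (hsym : Ct.IsSymm)
    (α : Fin M → ℝ) (h : IsUnit (Amat Ct α).det) :
    frobSq (Cmat Ct α)
      = frobSq Ct + 2 * (M : ℝ) * (∑ i, (α i) ^ 2) + (M : ℝ) ^ 2 * (vfun Ct α) ^ 2
        + 4 * ((1 : Fin M → ℝ) ⬝ᵥ (Ct *ᵥ α))
        + 2 * (∑ i, α i) ^ 2
        - 2 * ((1 : Fin M → ℝ) ⬝ᵥ (Ct *ᵥ (1 : Fin M → ℝ))) * vfun Ct α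
        - 4 * (M : ℝ) * (∑ i, α i) * vfun Ct α :=
  frobSq_Cmat_expansion_general Ct hsym α
end

section
/- With the notation A_α = C̃ + α1ᵀ + 1αᵀ invertible, v(α) = 1/(1ᵀA_α⁻¹1), C_α = A_α − v(α)11ᵀ, a = Σαᵢ, c = 1ᵀC̃1, the gradient satisfies (1/4)∇‖C_α‖_F² = Mα + [M²v(α)² − c·v(α) − 2Ma·v(α)]·A_α⁻¹1 + C̃1 + [a − M·v(α)]·1. -/
/-!
Moving `αᵢ` to `t` is the symmetric rank-two update `A(t) = A_α + ε (eᵢ1ᵀ + 1eᵢᵀ)`, `ε = t - αᵢ`.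
Solving `A(t) x = 1` in the span of `u = A_α⁻¹1` and `A_α⁻¹eᵢ` gives
`1ᵀA(t)⁻¹1 · D(t) = 1ᵀu` with `D(t) = (1 + ε uᵢ)² - ε² (A_α⁻¹)ᵢᵢ 1ᵀu`, so near `αᵢ` we have
`v(t) = D(t) v(α)` and `v'(αᵢ) = 2 uᵢ v(α)`. Hence `C' = eᵢ1ᵀ + 1eᵢᵀ - 2 uᵢ v 11ᵀ`, and by symmetry
of `C_α` the derivative `2 ⟨C_α, C'⟩_F` equals `4 (C_α 1)ᵢ - 4 uᵢ v 1ᵀC_α1`; expanding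
`C_α 1 = C̃1 + Mα + (a - M v) 1` gives the formula.
-/

open Matrix BigOperators

open Filter Topology

section RankTwoUpdate

variable {n R : Type*} [Fintype n] [CommRing R]

theorem Matrix.IsSymm.dotProduct_mulVec_comm_s11 {A : Matrix n n R} (hA : A.IsSymm) (x y : n → R) :
    x ⬝ᵥ (A *ᵥ y) = y ⬝ᵥ (A *ᵥ x) := by
  rw [dotProduct_mulVec, ← mulVec_transpose, hA.eq, dotProduct_comm]

theorem dotProduct_inv_mulVec_symm_rank_two_update [DecidableEq n] {A : Matrix n n R}
    (hA : A.IsSymm) (hdet : IsUnit A.det) (p q : n → R) (ε : R)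
    (hdet' : IsUnit (A + ε • (vecMulVec p q + vecMulVec q p)).det) :
    q ⬝ᵥ ((A + ε • (vecMulVec p q + vecMulVec q p))⁻¹ *ᵥ q)
        * ((1 + ε * (p ⬝ᵥ (A⁻¹ *ᵥ q))) ^ 2
          - ε ^ 2 * (p ⬝ᵥ (A⁻¹ *ᵥ p)) * (q ⬝ᵥ (A⁻¹ *ᵥ q)))
      = q ⬝ᵥ (A⁻¹ *ᵥ q) := by
  set A' := A + ε • (vecMulVec p q + vecMulVec q p)
  set m := p ⬝ᵥ (A⁻¹ *ᵥ q)
  set s := q ⬝ᵥ (A⁻¹ *ᵥ q)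
  set D := (1 + ε * m) ^ 2 - ε ^ 2 * (p ⬝ᵥ (A⁻¹ *ᵥ p)) * s
  have hqp : q ⬝ᵥ (A⁻¹ *ᵥ p) = m := hA.inv.dotProduct_mulVec_comm_s11 q p
  have hAinv (y : n → R) : A *ᵥ (A⁻¹ *ᵥ y) = y := by
    rw [mulVec_mulVec, mul_nonsing_inv A hdet, one_mulVec]
  set x := (1 + ε * m) • (A⁻¹ *ᵥ q) - (ε * s) • (A⁻¹ *ᵥ p)
  have hx : A' *ᵥ x = D • q := by
    simp only [A', x, add_mulVec, smul_mulVec, mulVec_sub, mulVec_smul, hAinv, vecMulVec_mulVec,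
      hqp, op_smul_eq_smul]
    module
  have hinv : A'⁻¹ *ᵥ (D • q) = x := by
    rw [← hx, mulVec_mulVec, nonsing_inv_mul A' hdet', one_mulVec]
  calc q ⬝ᵥ (A'⁻¹ *ᵥ q) * D = q ⬝ᵥ x := by
        rw [← hinv, mulVec_smul, dotProduct_smul, smul_eq_mul, mul_comm]
    _ = s := by simp only [x, dotProduct_sub, dotProduct_smul, hqp, smul_eq_mul]; ring

end RankTwoUpdate

section Frobenius

theorem sum_sum_mul_vecMulVec {n : Type*} [Fintype n] (X : Matrix n n ℝ) (a b : n → ℝ) :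
    ∑ j, ∑ k, X j k * vecMulVec a b j k = a ⬝ᵥ (X *ᵥ b) := by
  simp only [vecMulVec_apply, dotProduct, mulVec, Finset.mul_sum]
  exact Finset.sum_congr rfl fun j _ => Finset.sum_congr rfl fun k _ => by ring

theorem hasDerivAt_frobSq {M : ℕ} {X : ℝ → Matrix (Fin M) (Fin M) ℝ}
    {X' : Matrix (Fin M) (Fin M) ℝ} {t₀ : ℝ}
    (hX : ∀ j k, HasDerivAt (fun t => X t j k) (X' j k) t₀) :
    HasDerivAt (fun t => frobSq (X t)) (2 * ∑ j, ∑ k, X t₀ j k * X' j k) t₀ := by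
  simp only [frobSq, Finset.mul_sum]
  exact HasDerivAt.fun_sum fun j _ => HasDerivAt.fun_sum fun k _ =>
    ((hX j k).fun_pow 2).congr_deriv (by ring)

end Frobenius

section Shift

variable {M : ℕ} {Ct : Matrix (Fin M) (Fin M) ℝ}

theorem Amat_isSymm (hsym : Ct.IsSymm) (α : Fin M → ℝ) : (Amat Ct α).IsSymm := by
  unfold Amat
  rw [add_assoc]
  refine hsym.add ?_
  simp only [IsSymm, transpose_add, transpose_vecMulVec, add_comm]

theorem Cmat_isSymm (hsym : Ct.IsSymm) (α : Fin M → ℝ) : (Cmat Ct α).IsSymm :=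
  (Amat_isSymm hsym α).sub (IsSymm.smul (transpose_vecMulVec 1 1) _)

variable (Ct)

theorem Amat_update (α : Fin M → ℝ) (i : Fin M) (t : ℝ) :
    Amat Ct (Function.update α i t) = Amat Ct α
      + (t - α i) • (vecMulVec (Pi.single i 1) 1 + vecMulVec 1 (Pi.single i 1)) := by
  have hupd : Function.update α i t = α + (t - α i) • Pi.single i 1 := by
    ext j; rcases eq_or_ne j i with rfl | hj <;> simp [*]
  rw [hupd]
  simp only [Amat, add_vecMulVec, vecMulVec_add, smul_vecMulVec, vecMulVec_smul, smul_add]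
  abel

theorem Cmat_mulVec_one (α : Fin M → ℝ) :
    Cmat Ct α *ᵥ 1 = Ct *ᵥ 1 + (M : ℝ) • α + ((∑ k, α k) - M * vfun Ct α) • 1 := by
  simp only [Cmat, Amat, sub_mulVec, add_mulVec, smul_mulVec, vecMulVec_mulVec, op_smul_eq_smul,
    dotProduct_one, Pi.one_apply, Finset.sum_const, Finset.card_univ, Fintype.card_fin,
    nsmul_eq_mul, mul_one]
  module

noncomputable def updateFactor (α : Fin M → ℝ) (i : Fin M) (t : ℝ) : ℝ :=
  (1 + (t - α i) * ((Amat Ct α)⁻¹ *ᵥ 1) i) ^ 2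
    - (t - α i) ^ 2 * (Amat Ct α)⁻¹ i i * (1 ⬝ᵥ ((Amat Ct α)⁻¹ *ᵥ 1))

theorem updateFactor_self (α : Fin M → ℝ) (i : Fin M) : updateFactor Ct α i (α i) = 1 := by
  simp [updateFactor]

theorem hasDerivAt_updateFactor (α : Fin M → ℝ) (i : Fin M) :
    HasDerivAt (updateFactor Ct α i) (2 * ((Amat Ct α)⁻¹ *ᵥ 1) i) (α i) := by
  have hlin : HasDerivAt (fun t : ℝ => t - α i) 1 (α i) := (hasDerivAt_id _).sub_const _
  exact ((((hlin.mul_const (((Amat Ct α)⁻¹ *ᵥ 1) i)).const_add 1).fun_pow 2).fun_sub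
    (((hlin.fun_pow 2).mul_const ((Amat Ct α)⁻¹ i i)).mul_const (1 ⬝ᵥ ((Amat Ct α)⁻¹ *ᵥ 1)))
    ).congr_deriv (by simp)

theorem eventually_vfun_update (hsym : Ct.IsSymm) (α : Fin M → ℝ) (h : IsUnit (Amat Ct α).det)
    (i : Fin M) :
    ∀ᶠ t in 𝓝 (α i), vfun Ct (Function.update α i t) = updateFactor Ct α i t * vfun Ct α := by
  have hdet : ∀ᶠ t in 𝓝 (α i), (Amat Ct (Function.update α i t)).det ≠ 0 := by
    refine ContinuousAt.eventually_ne ?_ (by simpa using h.ne_zero)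
    simp_rw [Amat_update]
    fun_prop
  have hD : ∀ᶠ t in 𝓝 (α i), updateFactor Ct α i t ≠ 0 :=
    (hasDerivAt_updateFactor Ct α i).continuousAt.eventually_ne (by simp [updateFactor_self])
  filter_upwards [hdet, hD] with t hdet hD
  have key := dotProduct_inv_mulVec_symm_rank_two_update (Amat_isSymm hsym α) h
    (Pi.single i 1) 1 (t - α i) (by rw [← Amat_update]; exact hdet.isUnit)
  rw [← Amat_update] at key
  simp only [single_one_dotProduct, mulVec_single_one, col_apply] at key
  rw [vfun, vfun, ← key, ← updateFactor, one_div, one_div, _root_.mul_inv_rev,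
    mul_inv_cancel_left₀ hD]

theorem hasDerivAt_Cmat_update_apply (hsym : Ct.IsSymm) (α : Fin M → ℝ)
    (h : IsUnit (Amat Ct α).det) (i j k : Fin M) :
    HasDerivAt (fun t => Cmat Ct (Function.update α i t) j k)
      ((vecMulVec (Pi.single i 1) 1 + vecMulVec 1 (Pi.single i 1)
        - (2 * ((Amat Ct α)⁻¹ *ᵥ 1) i * vfun Ct α) • vecMulVec 1 1 : Matrix (Fin M) (Fin M) ℝ) j k)
      (α i) := by
  set E : Matrix (Fin M) (Fin M) ℝ := vecMulVec (Pi.single i 1) 1 + vecMulVec 1 (Pi.single i 1)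
  have hlin : HasDerivAt (fun t : ℝ => t - α i) 1 (α i) := (hasDerivAt_id _).sub_const _
  have hmodel : HasDerivAt
      (fun t => Amat Ct α j k + (t - α i) * E j k - updateFactor Ct α i t * vfun Ct α)
      (E j k - 2 * ((Amat Ct α)⁻¹ *ᵥ 1) i * vfun Ct α) (α i) :=
    (((hlin.mul_const (E j k)).const_add _).sub
      ((hasDerivAt_updateFactor Ct α i).mul_const _)).congr_deriv (by ring)
  refine (hmodel.congr_of_eventuallyEq ?_).congr_deriv (by simp)
  filter_upwards [eventually_vfun_update Ct hsym α h i] with t ht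
  simp only [Cmat, Amat_update, ht, Matrix.sub_apply, Matrix.add_apply, Matrix.smul_apply,
    smul_eq_mul, vecMulVec_apply, Pi.one_apply, mul_one, E]

end Shift

/-- Gradient of the C-SHIFT energy (Lemma 2), stated coordinatewise: with `a = Σαᵢ` and
`c = 1ᵀC̃1`,
`(1/4)∇‖C_α‖_F² = Mα + [M²v(α)² − c v(α) − 2Ma v(α)] A_α⁻¹1 + C̃1 + [a − M v(α)]1`. -/
theorem grad_frobSq_Cmat {M : ℕ} (Ct : Matrix (Fin M) (Fin M) ℝ) (hsym : Ct.IsSymm)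
    (α : Fin M → ℝ) (h : IsUnit (Amat Ct α).det) (i : Fin M) :
    deriv (fun t => frobSq (Cmat Ct (Function.update α i t))) (α i)
      = 4 * ((M : ℝ) * α i
          + ((M : ℝ) ^ 2 * (vfun Ct α) ^ 2
              - ((1 : Fin M → ℝ) ⬝ᵥ (Ct *ᵥ (1 : Fin M → ℝ))) * vfun Ct α
              - 2 * (M : ℝ) * (∑ k, α k) * vfun Ct α)
              * ((Amat Ct α)⁻¹ *ᵥ (1 : Fin M → ℝ)) i
          + (Ct *ᵥ (1 : Fin M → ℝ)) i
          + ((∑ k, α k) - (M : ℝ) * vfun Ct α)) := by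
  rw [(hasDerivAt_frobSq (hasDerivAt_Cmat_update_apply Ct hsym α h i)).deriv,
    Function.update_eq_self]
  simp only [Matrix.sub_apply, Matrix.add_apply, Matrix.smul_apply, smul_eq_mul, mul_sub, mul_add,
    Finset.sum_sub_distrib, Finset.sum_add_distrib, mul_left_comm _ (2 * _ * vfun Ct α),
    ← Finset.mul_sum, sum_sum_mul_vecMulVec, (Cmat_isSymm hsym α).dotProduct_mulVec_comm_s11 1,
    single_one_dotProduct, Cmat_mulVec_one]
  simp only [dotProduct_add, dotProduct_smul, one_dotProduct, Pi.add_apply, Pi.smul_apply,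
    smul_eq_mul, Pi.one_apply, Finset.sum_const, Finset.card_univ, Fintype.card_fin, nsmul_eq_mul]
  ring
end

section
/- With the notation of the C-SHIFT gradient formula, the all-ones vector annihilates the gradient: 1ᵀ∇‖C_α‖_F² = 0 for all admissible α; consequently the sum a = Σᵢαᵢ is conserved along gradient-descent trajectories of ‖C_α‖_F². -/
/-!
Shifting `α` by `t • 1` adds `2t • 11ᵀ` to `A_α`, and by the Sherman–Morrison formula
`v = 1 / (1ᵀ A⁻¹ 1)` then grows by exactly `2t`, so `C_α` does not change:
`‖C_α‖_F²` is locally constant along the direction `1` (invertibility of `A` is an open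
condition). It is also differentiable, since `A⁻¹` is and `1ᵀ A⁻¹ 1 ≠ 0`: for `y = A⁻¹ 1` one has
`1ᵀ y = yᵀ A y = yᵀ C̃ y + 2 (αᵀ y)(1ᵀ y)`, so `1ᵀ y = 0` would contradict positive definiteness.
Hence the sum of the partial derivatives, which is the derivative along `1`, vanishes.
-/

open Matrix BigOperators

open Filter Topology

section Calculus

variable {𝕜 E F : Type*} [NontriviallyNormedField 𝕜] [NormedAddCommGroup E] [NormedSpace 𝕜 E]
  [NormedAddCommGroup F] [NormedSpace 𝕜 F]

theorem sum_deriv_update_eq_fderiv_one {ι : Type*} [Fintype ι] [DecidableEq ι]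
    {f : (ι → 𝕜) → F} {x : ι → 𝕜} (hf : DifferentiableAt 𝕜 f x) :
    ∑ i, deriv (fun t => f (Function.update x i t)) (x i) = fderiv 𝕜 f x 1 := by
  have hpartial (i : ι) :
      deriv (fun t => f (Function.update x i t)) (x i) = fderiv 𝕜 f x (Pi.single i 1) := by
    have hf' : HasFDerivAt f (fderiv 𝕜 f x) (Function.update x i (x i)) := by
      rw [Function.update_eq_self]
      exact hf.hasFDerivAt
    exact (hf'.comp_hasDerivAt (x i) (hasDerivAt_update x i (x i))).deriv
  simp_rw [hpartial, ← map_sum]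
  congr 1
  simpa using Finset.univ_sum_single (1 : ι → 𝕜)

theorem DifferentiableAt.fderiv_apply_eq_zero_of_eventually_eq {f : E → F} {x v : E}
    (hf : DifferentiableAt 𝕜 f x) (hconst : ∀ᶠ t in 𝓝 (0 : 𝕜), f (x + t • v) = f x) :
    fderiv 𝕜 f x v = 0 := by
  have hline : (fun t : 𝕜 => f (x + t • v)) =ᶠ[𝓝 0] fun _ => f x := hconst
  rw [← hf.lineDeriv_eq_fderiv, lineDeriv, hline.deriv_eq, deriv_const]

variable {n : Type*} [Fintype n] [DecidableEq n] {f : E → Matrix n n 𝕜} {x : E}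

theorem Matrix.differentiableAt_det (hf : ∀ i j, DifferentiableAt 𝕜 (fun y => f y i j) x) :
    DifferentiableAt 𝕜 (fun y => (f y).det) x := by
  simp only [det_apply]
  fun_prop

theorem Matrix.differentiableAt_adjugate_apply
    (hf : ∀ i j, DifferentiableAt 𝕜 (fun y => f y i j) x) (i j : n) :
    DifferentiableAt 𝕜 (fun y => (f y).adjugate i j) x := by
  simp only [adjugate_apply]
  refine differentiableAt_det fun k l => ?_
  by_cases hk : k = j
  · simp [hk]
  · simpa [hk] using hf k l

theorem Matrix.differentiableAt_inv_apply
    (hf : ∀ i j, DifferentiableAt 𝕜 (fun y => f y i j) x) (hx : IsUnit (f x).det) (i j : n) :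
    DifferentiableAt 𝕜 (fun y => (f y)⁻¹ i j) x := by
  simp only [inv_def, smul_apply, smul_eq_mul, Ring.inverse_eq_inv']
  exact ((differentiableAt_det hf).inv hx.ne_zero).mul (differentiableAt_adjugate_apply hf i j)

end Calculus

section ShermanMorrison

variable {n K : Type*} [Fintype n] [DecidableEq n] [Field K] {A : Matrix n n K}

theorem Matrix.nonsing_inv_mulVec_mulVec (hA : IsUnit A.det) (y : n → K) :
    A⁻¹ *ᵥ (A *ᵥ y) = y := by
  rw [mulVec_mulVec, nonsing_inv_mul _ hA, one_mulVec]

theorem Matrix.mulVec_nonsing_inv_mulVec (hA : IsUnit A.det) (y : n → K) :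
    A *ᵥ (A⁻¹ *ᵥ y) = y := by
  rw [mulVec_mulVec, mul_nonsing_inv _ hA, one_mulVec]

theorem Matrix.one_div_dotProduct_inv_mulVec_add_smul_vecMulVec {u : n → K} {c : K}
    (hA : IsUnit A.det) (hB : IsUnit (A + c • vecMulVec u u).det)
    (hs : u ⬝ᵥ (A⁻¹ *ᵥ u) ≠ 0) :
    1 / (u ⬝ᵥ ((A + c • vecMulVec u u)⁻¹ *ᵥ u)) = 1 / (u ⬝ᵥ (A⁻¹ *ᵥ u)) + c := by
  set B := A + c • vecMulVec u u
  set y := A⁻¹ *ᵥ u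
  set s := u ⬝ᵥ y
  have hBy : B *ᵥ y = (1 + c * s) • u := by
    rw [add_mulVec, mulVec_nonsing_inv_mulVec hA, smul_mulVec, vecMulVec_mulVec, add_smul,
      one_smul]
    simp [smul_smul, s, y]
  have hcs : 1 + c * s ≠ 0 := by
    intro h0
    rw [h0, zero_smul] at hBy
    have : y = 0 := by rw [← nonsing_inv_mulVec_mulVec hB y, hBy, mulVec_zero]
    exact hs (by simp [s, this])
  have hBu : B⁻¹ *ᵥ u = (1 + c * s)⁻¹ • y := by
    rw [← nonsing_inv_mulVec_mulVec hB y, hBy, mulVec_smul, smul_smul, inv_mul_cancel₀ hcs,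
      one_smul]
  change 1 / (u ⬝ᵥ (B⁻¹ *ᵥ u)) = 1 / s + c
  rw [hBu, dotProduct_smul, smul_eq_mul]
  change 1 / ((1 + c * s)⁻¹ * s) = 1 / s + c
  field_simp

end ShermanMorrison

variable {M : ℕ} {Ct : Matrix (Fin M) (Fin M) ℝ} {α : Fin M → ℝ}

theorem Amat_add_smul_one (Ct : Matrix (Fin M) (Fin M) ℝ) (α : Fin M → ℝ) (t : ℝ) :
    Amat Ct (α + t • 1) = Amat Ct α + (2 * t) • vecMulVec 1 1 := by
  ext i j
  simp [Amat]
  ring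

theorem dotProduct_Amat_mulVec (Ct : Matrix (Fin M) (Fin M) ℝ) (α y : Fin M → ℝ) :
    y ⬝ᵥ (Amat Ct α *ᵥ y) = y ⬝ᵥ (Ct *ᵥ y) + 2 * (α ⬝ᵥ y) * (1 ⬝ᵥ y) := by
  simp only [Amat, add_mulVec, vecMulVec_mulVec, dotProduct_add, dotProduct_smul, op_smul_eq_smul,
    smul_eq_mul, dotProduct_comm y 1, dotProduct_comm y α]
  ring

theorem one_dotProduct_inv_Amat_mulVec_one_ne_zero [NeZero M] (hCt : Ct.PosDef)
    (hA : IsUnit (Amat Ct α).det) : 1 ⬝ᵥ ((Amat Ct α)⁻¹ *ᵥ 1) ≠ 0 := by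
  set y := (Amat Ct α)⁻¹ *ᵥ 1
  have hAy : Amat Ct α *ᵥ y = 1 := mulVec_nonsing_inv_mulVec hA 1
  have hy : y ≠ 0 := by
    intro h0
    rw [h0, mulVec_zero] at hAy
    exact zero_ne_one hAy
  intro hs
  have hquad := dotProduct_Amat_mulVec Ct α y
  rw [hAy, dotProduct_comm, hs, mul_zero, add_zero] at hquad
  simpa [← hquad] using hCt.dotProduct_mulVec_pos hy

theorem Cmat_add_smul_one (hs : 1 ⬝ᵥ ((Amat Ct α)⁻¹ *ᵥ 1) ≠ 0) (hA : IsUnit (Amat Ct α).det)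
    {t : ℝ} (hA' : IsUnit (Amat Ct (α + t • 1)).det) :
    Cmat Ct (α + t • 1) = Cmat Ct α := by
  rw [Amat_add_smul_one] at hA'
  have hv : vfun Ct (α + t • 1) = vfun Ct α + 2 * t := by
    rw [vfun, vfun, Amat_add_smul_one]
    exact one_div_dotProduct_inv_mulVec_add_smul_vecMulVec hA hA' hs
  rw [Cmat, Cmat, hv, Amat_add_smul_one, add_smul]
  abel

theorem eventually_isUnit_det_Amat_add_smul_one (hA : IsUnit (Amat Ct α).det) :
    ∀ᶠ t in 𝓝 (0 : ℝ), IsUnit (Amat Ct (α + t • 1)).det := by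
  have hcont : Continuous fun t : ℝ => (Amat Ct (α + t • 1)).det := by
    simp only [Amat_add_smul_one]
    fun_prop
  filter_upwards [hcont.continuousAt.eventually_ne (by simpa using hA.ne_zero)] with t ht
  exact ht.isUnit

theorem differentiable_Amat_apply (Ct : Matrix (Fin M) (Fin M) ℝ) (i j : Fin M) :
    Differentiable ℝ fun β => Amat Ct β i j := by
  simp only [Amat, Matrix.add_apply, vecMulVec_apply, Pi.one_apply, mul_one, one_mul]
  fun_prop

theorem differentiableAt_vfun [NeZero M] (hCt : Ct.PosDef) (hA : IsUnit (Amat Ct α).det) :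
    DifferentiableAt ℝ (vfun Ct) α := by
  have hinv := differentiableAt_inv_apply (fun i j => differentiable_Amat_apply Ct i j α) hA
  have hs : DifferentiableAt ℝ (fun β => 1 ⬝ᵥ ((Amat Ct β)⁻¹ *ᵥ 1)) α := by
    simp only [dotProduct, mulVec, Pi.one_apply, one_mul, mul_one]
    exact .fun_sum fun i _ => .fun_sum fun j _ => hinv i j
  show DifferentiableAt ℝ (fun β => 1 / (1 ⬝ᵥ ((Amat Ct β)⁻¹ *ᵥ 1))) α
  simpa only [one_div] using hs.fun_inv (one_dotProduct_inv_Amat_mulVec_one_ne_zero hCt hA)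

theorem differentiableAt_frobSq_Cmat [NeZero M] (hCt : Ct.PosDef)
    (hA : IsUnit (Amat Ct α).det) :
    DifferentiableAt ℝ (fun β => frobSq (Cmat Ct β)) α := by
  have hC (i j : Fin M) : DifferentiableAt ℝ (fun β => Cmat Ct β i j) α := by
    simp only [Cmat, Matrix.sub_apply, Matrix.smul_apply, vecMulVec_apply, Pi.one_apply, mul_one,
      smul_eq_mul]
    exact (differentiable_Amat_apply Ct i j α).sub (differentiableAt_vfun hCt hA)
  simp only [frobSq]
  fun_prop

/-- The all-ones vector annihilates the gradient of the C-SHIFT energy: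
`1ᵀ ∇‖C_α‖_F² = 0`, i.e. the sum of the partial derivatives vanishes, so that
`a = Σαᵢ` is conserved along gradient descent of `‖C_α‖_F²`. -/
theorem ones_annihilate_grad {M : ℕ} (Ct : Matrix (Fin M) (Fin M) ℝ) (hCt : Ct.PosDef)
    (α : Fin M → ℝ) (h : IsUnit (Amat Ct α).det) :
    ∑ i, deriv (fun t => frobSq (Cmat Ct (Function.update α i t))) (α i) = 0 := by
  obtain rfl | hM := eq_or_ne M 0
  · simp
  have : NeZero M := ⟨hM⟩
  have hF := differentiableAt_frobSq_Cmat hCt h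
  rw [sum_deriv_update_eq_fderiv_one hF]
  refine hF.fderiv_apply_eq_zero_of_eventually_eq ?_
  filter_upwards [eventually_isUnit_det_Amat_add_smul_one h] with t ht
  rw [Cmat_add_smul_one (one_dotProduct_inv_Amat_mulVec_one_ne_zero hCt h) h ht]
end

section
/- Let λ₁,…,λ_M > 0 and let p be a probability vector on {1,…,M}. Then Σᵢ λᵢ⁻¹pᵢ + (1/M)(Σᵢ λᵢ⁻¹pᵢ)(Σ_j λ_j⁻¹)(Σ_k λ_k p_k) ≥ (1/M)(Σᵢ λᵢ⁻²pᵢ)(Σ_k λ_k p_k) + (1/M)Σᵢ λᵢ⁻¹. -/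
open BigOperators

open Finset in
private lemma key_ineq {M : ℕ} (hM : 2 ≤ M) (lam : Fin M → ℝ) (hpos : ∀ i, 0 < lam i)
    (p : Fin M → ℝ) (hp0 : ∀ i, 0 ≤ p i) (hp1 : ∑ i, p i = 1) (j : Fin M) :
    (∑ k, lam k * p k) * (lam j)⁻¹ * p j + 1
      ≤ (M : ℝ) * p j + (∑ i, (lam i)⁻¹ * p i) * (∑ k, lam k * p k) := by
  set s : Finset (Fin M) := univ.erase j with hs
  have hcs : (∑ i ∈ s, p i) ^ 2 ≤ (∑ i ∈ s, lam i * p i) * (∑ i ∈ s, (lam i)⁻¹ * p i) := by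
    refine sum_sq_le_sum_mul_sum_of_sq_eq_mul s
      (fun i _ => mul_nonneg (hpos i).le (hp0 i))
      (fun i _ => mul_nonneg (inv_nonneg.mpr (hpos i).le) (hp0 i))
      (fun i _ => ?_)
    field_simp [(hpos i).ne']
  have hps : ∑ i ∈ s, p i = 1 - p j := by
    have := Finset.add_sum_erase univ p (Finset.mem_univ j)
    rw [hp1] at this
    linarith [this]
  have hls : ∑ i ∈ s, lam i * p i = (∑ k, lam k * p k) - lam j * p j := by
    have := Finset.add_sum_erase univ (fun k => lam k * p k) (Finset.mem_univ j)
    linarith [this]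
  have hils : ∑ i ∈ s, (lam i)⁻¹ * p i = (∑ i, (lam i)⁻¹ * p i) - (lam j)⁻¹ * p j := by
    have := Finset.add_sum_erase univ (fun i => (lam i)⁻¹ * p i) (Finset.mem_univ j)
    linarith [this]
  rw [hps, hls, hils] at hcs
  have h1 : (1 : ℝ) - (M : ℝ) * p j ≤ (1 - p j) ^ 2 := by
    have hM' : (2 : ℝ) ≤ (M : ℝ) := by exact_mod_cast hM
    nlinarith [hp0 j]
  have hS : (0 : ℝ) ≤ ∑ k, lam k * p k :=
    Finset.sum_nonneg fun k _ => mul_nonneg (hpos k).le (hp0 k)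
  have hA : (0 : ℝ) ≤ (∑ i, (lam i)⁻¹ * p i) - (lam j)⁻¹ * p j := by
    rw [← hils]
    exact Finset.sum_nonneg fun i _ => mul_nonneg (inv_nonneg.mpr (hpos i).le) (hp0 i)
  have hlj : (0 : ℝ) ≤ lam j * p j := mul_nonneg (hpos j).le (hp0 j)
  have h2 : ((∑ k, lam k * p k) - lam j * p j) * ((∑ i, (lam i)⁻¹ * p i) - (lam j)⁻¹ * p j)
      ≤ (∑ k, lam k * p k) * ((∑ i, (lam i)⁻¹ * p i) - (lam j)⁻¹ * p j) := by
    apply mul_le_mul_of_nonneg_right _ hA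
    linarith
  nlinarith [hcs, h1, h2]

open Finset in
private lemma spectral_ineq_aux {M : ℕ} (hM : 2 ≤ M) (lam : Fin M → ℝ)
    (hpos : ∀ i, 0 < lam i)
    (p : Fin M → ℝ) (hp0 : ∀ i, 0 ≤ p i) (hp1 : ∑ i, p i = 1) :
    (1 / (M : ℝ)) * (∑ i, ((lam i) ^ 2)⁻¹ * p i) * (∑ k, lam k * p k)
        + (1 / (M : ℝ)) * (∑ i, (lam i)⁻¹)
      ≤ (∑ i, (lam i)⁻¹ * p i)
        + (1 / (M : ℝ)) * (∑ i, (lam i)⁻¹ * p i) * (∑ j, (lam j)⁻¹) * (∑ k, lam k * p k) := by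
  have hM0 : (M : ℝ) ≠ 0 := by positivity
  set S := ∑ k, lam k * p k with hSdef
  set A := ∑ i, (lam i)⁻¹ * p i with hAdef
  set X := ∑ i, ((lam i) ^ 2)⁻¹ * p i with hXdef
  set L := ∑ i, (lam i)⁻¹ with hLdef
  have key : ∀ j : Fin M, ((lam j) ^ 2)⁻¹ * p j * S + (lam j)⁻¹
      ≤ (M : ℝ) * ((lam j)⁻¹ * p j) + (A * S) * (lam j)⁻¹ := by
    intro j
    have h := key_ineq hM lam hpos p hp0 hp1 j
    have h2 := mul_le_mul_of_nonneg_left h (inv_nonneg.mpr (hpos j).le)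
    have e1 : ((lam j) ^ 2)⁻¹ = (lam j)⁻¹ * (lam j)⁻¹ := by rw [sq, mul_inv]
    calc ((lam j) ^ 2)⁻¹ * p j * S + (lam j)⁻¹
        = (lam j)⁻¹ * (S * (lam j)⁻¹ * p j + 1) := by rw [e1]; ring
      _ ≤ (lam j)⁻¹ * ((M : ℝ) * p j + A * S) := h2
      _ = (M : ℝ) * ((lam j)⁻¹ * p j) + (A * S) * (lam j)⁻¹ := by ring
  have hsum := Finset.sum_le_sum (fun j (_ : j ∈ Finset.univ) => key j)
  rw [Finset.sum_add_distrib, Finset.sum_add_distrib, ← Finset.sum_mul,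
    ← Finset.mul_sum, ← Finset.mul_sum] at hsum
  -- hsum : X * S + L ≤ M * A + (A * S) * L
  calc (1 / (M : ℝ)) * X * S + (1 / (M : ℝ)) * L
      = (1 / (M : ℝ)) * (X * S + L) := by ring
    _ ≤ (1 / (M : ℝ)) * ((M : ℝ) * A + (A * S) * L) := by
        apply mul_le_mul_of_nonneg_left _ (by positivity)
        exact hsum
    _ = A + (1 / (M : ℝ)) * A * L * S := by field_simp

/-- Key spectral inequality for the convexity of the C-SHIFT energy: for positive reals
`λ₁,…,λ_M` and a probability vector `p`,
`Σᵢ λᵢ⁻¹pᵢ + (1/M)(Σᵢ λᵢ⁻¹pᵢ)(Σⱼ λⱼ⁻¹)(Σₖ λₖpₖ)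
  ≥ (1/M)(Σᵢ λᵢ⁻²pᵢ)(Σₖ λₖpₖ) + (1/M)Σᵢ λᵢ⁻¹`. -/
theorem spectral_ineq {M : ℕ} (lam : Fin M → ℝ) (hpos : ∀ i, 0 < lam i)
    (p : Fin M → ℝ) (hp0 : ∀ i, 0 ≤ p i) (hp1 : ∑ i, p i = 1) :
    (1 / (M : ℝ)) * (∑ i, ((lam i) ^ 2)⁻¹ * p i) * (∑ k, lam k * p k)
        + (1 / (M : ℝ)) * (∑ i, (lam i)⁻¹)
      ≤ (∑ i, (lam i)⁻¹ * p i)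
        + (1 / (M : ℝ)) * (∑ i, (lam i)⁻¹ * p i) * (∑ j, (lam j)⁻¹) * (∑ k, lam k * p k) := by
  rcases le_or_gt 2 M with hM | hM
  · exact spectral_ineq_aux hM lam hpos p hp0 hp1
  · interval_cases M
    · simp
    · simp only [Fin.sum_univ_one, Nat.cast_one] at hp1 ⊢
      rw [hp1]
      have h0 := (hpos 0).ne'
      have : ((lam 0) ^ 2)⁻¹ * (lam 0) = (lam 0)⁻¹ := by
        field_simp
      apply le_of_eq
      field_simp
end

section
/- Let A be a symmetric positive definite M×M matrix with c = 1ᵀA1 and v = 1/(1ᵀA⁻¹1). Then M²(1 − v·Tr(A⁻¹)) + c·(Tr(A⁻¹) − v·1ᵀA⁻²1) ≥ 0. -/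
/-!
Diagonalise `A = ∑ λᵢ vᵢ vᵢᵀ` and put `xᵢ = λᵢ⁻¹`, `pᵢ = (vᵢ ⬝ᵥ 1)²`, so that `∑ pᵢ = M`,
`1ᵀA1 = ∑ pᵢ/xᵢ`, `1ᵀA⁻¹1 = ∑ pᵢxᵢ`, `1ᵀA⁻²1 = ∑ pᵢxᵢ²` and `Tr A⁻¹ = ∑ xᵢ`. After clearing the
denominator `1ᵀA⁻¹1`, the inequality becomes half of `∑ᵢ ∑ₖ pᵢpₖ (K(i,k) + K(k,i)) ≥ 0` for the kernel
`K(i,k) = xᵢ(T - xᵢ)/xₖ + (M xᵢ - T)`, `T = ∑ xⱼ`, whose symmetrisation is nonnegative because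
`xᵢxₖ (K(i,k) + K(k,i)) = (xᵢ - xₖ)² (T - xᵢ - xₖ) + (M - 1) xᵢxₖ(xᵢ + xₖ)`.
-/

open Matrix Finset

section WeightedSums

variable {ι : Type*} [Fintype ι]

theorem sum_sum_mul_mul_symmetrize (p : ι → ℝ) (g : ι → ι → ℝ) :
    ∑ i, ∑ k, p i * p k * (g i k + g k i) = 2 * ∑ i, ∑ k, p i * p k * g i k := by
  have hswap : ∑ i, ∑ k, p i * p k * g k i = ∑ i, ∑ k, p i * p k * g i k := by
    rw [sum_comm]
    exact sum_congr rfl fun i _ ↦ sum_congr rfl fun k _ ↦ by ring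
  simp only [mul_add, sum_add_distrib, hswap]
  ring

theorem sum_sum_mul_mul_mul_add (p a b c : ι → ℝ) :
    ∑ i, ∑ k, p i * p k * (a i * b k + c i)
      = (∑ i, p i * a i) * (∑ k, p k * b k) + (∑ i, p i * c i) * ∑ k, p k := by
  simp only [sum_mul_sum, ← sum_add_distrib]
  exact sum_congr rfl fun i _ ↦ sum_congr rfl fun k _ ↦ by ring

theorem sq_sub_mul_sum_sub_sub_nonneg {x : ι → ℝ} (hx : ∀ i, 0 ≤ x i) (i k : ι) :
    0 ≤ (x i - x k) ^ 2 * (∑ j, x j - x i - x k) := by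
  classical
  rcases eq_or_ne i k with rfl | hik
  · simp
  · have hpair := sum_le_sum_of_subset_of_nonneg (subset_univ {i, k}) fun j _ _ ↦ hx j
    rw [sum_pair hik] at hpair
    nlinarith [sq_nonneg (x i - x k)]

noncomputable def pairKernel (x : ι → ℝ) (i k : ι) : ℝ :=
  x i * (∑ j, x j - x i) * (x k)⁻¹ + (Fintype.card ι * x i - ∑ j, x j)

theorem pairKernel_add_pairKernel_nonneg {x : ι → ℝ} (hx : ∀ i, 0 < x i) (i k : ι) :
    0 ≤ pairKernel x i k + pairKernel x k i := by
  have hi := hx i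
  have hk := hx k
  have hcard : (0 : ℝ) ≤ Fintype.card ι - 1 :=
    sub_nonneg.2 (by exact_mod_cast Fintype.card_pos_iff.2 ⟨i⟩)
  have hsq := sq_sub_mul_sum_sub_sub_nonneg (fun j ↦ (hx j).le) i k
  have hform : pairKernel x i k + pairKernel x k i
      = ((x i - x k) ^ 2 * (∑ j, x j - x i - x k)
          + (Fintype.card ι - 1) * x i * x k * (x i + x k)) / (x i * x k) := by
    unfold pairKernel
    field_simp
    ring
  rw [hform]
  positivity

theorem weighted_sum_ineq {x : ι → ℝ} (hx : ∀ i, 0 < x i) {p : ι → ℝ} (hp : ∀ i, 0 ≤ p i) :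
    0 ≤ (∑ i, p i / x i) * ((∑ i, p i * x i) * ∑ i, x i - ∑ i, p i * x i ^ 2)
      + (∑ i, p i) * (Fintype.card ι * ∑ i, p i * x i - (∑ i, x i) * ∑ i, p i) := by
  set T := ∑ j, x j
  have hdouble : 0 ≤ ∑ i, ∑ k, p i * p k * (pairKernel x i k + pairKernel x k i) :=
    sum_nonneg fun i _ ↦ sum_nonneg fun k _ ↦
      mul_nonneg (mul_nonneg (hp i) (hp k)) (pairKernel_add_pairKernel_nonneg hx i k)
  have hT : ∑ i, p i * (x i * (T - x i)) = (∑ i, p i * x i) * T - ∑ i, p i * x i ^ 2 := by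
    rw [sum_mul, ← sum_sub_distrib]
    exact sum_congr rfl fun i _ ↦ by ring
  have hN : ∑ i, p i * (Fintype.card ι * x i - T)
      = Fintype.card ι * ∑ i, p i * x i - T * ∑ i, p i := by
    rw [mul_sum, mul_sum, ← sum_sub_distrib]
    exact sum_congr rfl fun i _ ↦ by ring
  simp only [pairKernel] at hdouble
  rw [sum_sum_mul_mul_symmetrize, sum_sum_mul_mul_mul_add, hT, hN] at hdouble
  simp only [← div_eq_mul_inv] at hdouble
  linarith

theorem weighted_sum_ineq_of_sum_eq_card {x : ι → ℝ} (hx : ∀ i, 0 < x i) {p : ι → ℝ} (hp : ∀ i, 0 ≤ p i)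
    (hsum : ∑ i, p i = Fintype.card ι) :
    0 ≤ (Fintype.card ι : ℝ) ^ 2 * (1 - 1 / (∑ i, p i * x i) * ∑ i, x i)
      + (∑ i, p i / x i) * (∑ i, x i - 1 / (∑ i, p i * x i) * ∑ i, p i * x i ^ 2) := by
  obtain hs0 | hspos := (sum_nonneg fun i _ ↦ mul_nonneg (hp i) (hx i).le :
    0 ≤ ∑ i, p i * x i).eq_or_lt
  · have hc0 : 0 ≤ ∑ i, p i / x i := sum_nonneg fun i _ ↦ div_nonneg (hp i) (hx i).le
    have hT0 : 0 ≤ ∑ i, x i := sum_nonneg fun i _ ↦ (hx i).le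
    rw [← hs0, div_zero, zero_mul, zero_mul, sub_zero, sub_zero, mul_one]
    positivity
  · have key := weighted_sum_ineq hx hp
    rw [hsum] at key
    set s := ∑ i, p i * x i
    set N : ℝ := (Fintype.card ι : ℝ)
    have hform : N ^ 2 * (1 - 1 / s * ∑ i, x i)
          + (∑ i, p i / x i) * (∑ i, x i - 1 / s * ∑ i, p i * x i ^ 2)
        = ((∑ i, p i / x i) * (s * ∑ i, x i - ∑ i, p i * x i ^ 2)
          + N * (N * s - (∑ i, x i) * N)) / s := by
      field_simp
      ring
    rw [hform]
    exact div_nonneg key hspos.le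

end WeightedSums

namespace Matrix.IsHermitian

variable {n : Type*} [Fintype n] [DecidableEq n]

theorem trace_cfc {𝕜 : Type*} [RCLike 𝕜] {A : Matrix n n 𝕜} (hA : A.IsHermitian) (f : ℝ → ℝ) :
    (cfc f A).trace = ∑ i, (f (hA.eigenvalues i) : 𝕜) := by
  rw [cfc_eq hA, IsHermitian.cfc, Unitary.conjStarAlgAut_apply, trace_mul_cycle,
    Unitary.coe_star_mul_self, one_mul, trace_diagonal]
  rfl

theorem dotProduct_cfc_mulVec {A : Matrix n n ℝ} (hA : A.IsHermitian) (f : ℝ → ℝ) (y : n → ℝ) :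
    y ⬝ᵥ (cfc f A *ᵥ y) = ∑ i, f (hA.eigenvalues i) * (⇑(hA.eigenvectorBasis i) ⬝ᵥ y) ^ 2 := by
  have hw : y ᵥ* (hA.eigenvectorUnitary : Matrix n n ℝ) = fun i ↦ ⇑(hA.eigenvectorBasis i) ⬝ᵥ y := by
    ext i
    simp [vecMul, dotProduct, mul_comm]
  rw [cfc_eq hA, IsHermitian.cfc, Unitary.conjStarAlgAut_apply, ← mulVec_mulVec, ← mulVec_mulVec,
    dotProduct_mulVec, star_eq_conjTranspose, conjTranspose_eq_transpose_of_trivial,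
    mulVec_transpose, hw]
  simp [dotProduct, mulVec_diagonal, sq, mul_left_comm]

end Matrix.IsHermitian

theorem Matrix.PosDef.inv_eq_cfc {n : Type*} [Fintype n] [DecidableEq n] {A : Matrix n n ℝ}
    (hA : A.PosDef) : A⁻¹ = cfc (fun t : ℝ ↦ t⁻¹) A := by
  rw [nonsing_inv_eq_ringInverse]
  exact (cfc_ringInverse_id (R := ℝ) A hA.isUnit hA.isHermitian).symm

/-- For a symmetric positive definite `A` with `c = 1ᵀA1` and `v = 1/(1ᵀA⁻¹1)`:
`M²(1 − v·Tr(A⁻¹)) + c·(Tr(A⁻¹) − v·1ᵀA⁻²1) ≥ 0`. -/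
theorem trace_ineq {M : ℕ} (A : Matrix (Fin M) (Fin M) ℝ) (hA : A.PosDef) :
    0 ≤ (M : ℝ) ^ 2
          * (1 - (1 / ((1 : Fin M → ℝ) ⬝ᵥ (A⁻¹ *ᵥ (1 : Fin M → ℝ)))) * (A⁻¹).trace)
        + ((1 : Fin M → ℝ) ⬝ᵥ (A *ᵥ (1 : Fin M → ℝ)))
          * ((A⁻¹).trace
            - (1 / ((1 : Fin M → ℝ) ⬝ᵥ (A⁻¹ *ᵥ (1 : Fin M → ℝ))))
                * ((1 : Fin M → ℝ) ⬝ᵥ ((A⁻¹ * A⁻¹) *ᵥ (1 : Fin M → ℝ)))) := by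
  have hH := hA.isHermitian
  set p : Fin M → ℝ := fun i ↦ (⇑(hH.eigenvectorBasis i) ⬝ᵥ 1) ^ 2
  set x : Fin M → ℝ := fun i ↦ (hH.eigenvalues i)⁻¹
  have hx : ∀ i, 0 < x i := fun i ↦ inv_pos.2 (hA.eigenvalues_pos i)
  have hp : ∑ i, p i = Fintype.card (Fin M) := by
    simpa [cfc_const_one ℝ A] using (hH.dotProduct_cfc_mulVec (fun _ ↦ 1) 1).symm
  have hc : (1 : Fin M → ℝ) ⬝ᵥ (A *ᵥ 1) = ∑ i, p i / x i := by
    conv_lhs => rw [← cfc_id' ℝ A, hH.dotProduct_cfc_mulVec]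
    simp [x, p, div_eq_mul_inv, mul_comm]
  have hs : (1 : Fin M → ℝ) ⬝ᵥ (A⁻¹ *ᵥ 1) = ∑ i, p i * x i := by
    rw [hA.inv_eq_cfc, hH.dotProduct_cfc_mulVec]
    simp [x, p, mul_comm]
  have hu : (1 : Fin M → ℝ) ⬝ᵥ ((A⁻¹ * A⁻¹) *ᵥ 1) = ∑ i, p i * x i ^ 2 := by
    have hcont (f : ℝ → ℝ) : ContinuousOn f (spectrum ℝ A) := A.finite_real_spectrum.continuousOn f
    rw [hA.inv_eq_cfc, ← cfc_mul _ _ A (hcont _) (hcont _), hH.dotProduct_cfc_mulVec]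
    simp [x, p, mul_comm, sq]
  have htr : A⁻¹.trace = ∑ i, x i := by rw [hA.inv_eq_cfc, hH.trace_cfc]; rfl
  have key := weighted_sum_ineq_of_sum_eq_card hx (fun i ↦ sq_nonneg _) hp
  rw [Fintype.card_fin] at key
  rw [hc, hs, hu, htr]
  exact key
end
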